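/- Let A ∈ ℝ^{d×n} be a matrix with tropical rank rk_t(A) = r and Kapranov rank rk_K(A) > r. Then there exists a matrix B ∈ ℝ^{(d+1)×(n+1)} with tropical rank rk_t(B) = r + 1 and Kapranov rank rk_K(B) > r + 1. -/

import Mathlib

noncomputable section

/-- The field of generalized power series over ℝ with complex coefficients. -/
abbrev K : Type := HahnSeries ℝ ℂ

open Classical in
/-- The degree of an element of `K`: the least exponent of its support, `⊤` for `0`. -/
noncomputable def Kdeg (a : K) : WithTop ℝ :=
  if a = 0 then ⊤ else ((HahnSeries.order a : ℝ) : WithTop ℝ)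

/-- A square real matrix is tropically non-singular if the minimum in the tropical
permanent is attained by exactly one permutation. -/
def TropNonsing {k : ℕ} (S : Matrix (Fin k) (Fin k) ℝ) : Prop :=
  ∃! σ : Equiv.Perm (Fin k), ∀ τ : Equiv.Perm (Fin k),
    (∑ i, S i (σ i)) ≤ ∑ i, S i (τ i)

/-- The tropical rank: the largest size of a tropically non-singular square submatrix. -/
noncomputable def tropRank {m n : ℕ} (A : Matrix (Fin m) (Fin n) ℝ) : ℕ :=
  sSup {r : ℕ | ∃ (ρ : Fin r → Fin m) (c : Fin r → Fin n),
    Function.Injective ρ ∧ Function.Injective c ∧ TropNonsing (A.submatrix ρ c)}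

/-- A matrix over `K` is a lift of a real matrix if degrees of entries match. -/
def IsLift {m n : ℕ} (F : Matrix (Fin m) (Fin n) K) (B : Matrix (Fin m) (Fin n) ℝ) : Prop :=
  ∀ i j, Kdeg (F i j) = (B i j : WithTop ℝ)

/-- The Kapranov rank: the smallest rank over `K` of a lift. -/
noncomputable def kapRank {m n : ℕ} (B : Matrix (Fin m) (Fin n) ℝ) : ℕ :=
  sInf {r : ℕ | ∃ F : Matrix (Fin m) (Fin n) K, IsLift F B ∧ F.rank = r}

/-- The tuple `lam` realizes the tropical dependence of the rows of `A`. -/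
def Realizes {m n : ℕ} (lam : Fin m → WithTop ℝ) (A : Matrix (Fin m) (Fin n) ℝ) : Prop :=
  (∃ τ, lam τ ≠ ⊤) ∧
  ∀ k : Fin n, ∃ τ₁ τ₂ : Fin m, τ₁ ≠ τ₂ ∧
    (∀ τ, lam τ₁ + (A τ₁ k : WithTop ℝ) ≤ lam τ + (A τ k : WithTop ℝ)) ∧
    (∀ τ, lam τ₂ + (A τ₂ k : WithTop ℝ) ≤ lam τ + (A τ k : WithTop ℝ))

open Classical in
/-- The pattern of a real matrix, with entries in `{0, ∞} ⊆ ℝ ∪ {∞}`. -/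
noncomputable def pat {m n : ℕ} (A : Matrix (Fin m) (Fin n) ℝ) (u : Fin m) (v : Fin n) :
    WithTop ℝ :=
  if ∀ i, A u v ≤ A i v then 0 else ⊤

/-- The support of the `j`-th column of the pattern of `A`. -/
def colSupp {m n : ℕ} (A : Matrix (Fin m) (Fin n) ℝ) (j : Fin n) : Set (Fin m) :=
  {u | ∀ i, A u j ≤ A i j}



/-!
Let `B = [[A, M], [M, 0]]` be `A` bordered by a row and a column of a constant `M` with
`A i j < 2 * M` for all entries, and corner `0`.

Tropical rank: an optimal assignment of a minor of `B` containing the corner matches the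
border row to the border column, since otherwise an exchange saves `2 * M - A i j > 0`. So a
non-singular minor of `A` extends through the corner to one of `B`, and deleting from a
non-singular minor of `B` the row carrying the border together with its matched column
leaves a non-singular minor of `A`. Hence `rk_t B = rk_t A + 1`.

Kapranov rank: if `F` lifts `B`, with the border indexed by `∞` and corner entry `δ`, then
`δ F i j - F i ∞ * F ∞ j` lifts `A`, because the subtracted term has degree `2 * M > A i j`;
this matrix is `δ` times the Schur complement of `δ`, whose rank is `rank F - 1`. Hence
`rk_K B ≥ rk_K A + 1`.
-/

open Equiv Function

section PermCost

variable {m : ℕ}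

def permCost {k : ℕ} (S : Matrix (Fin k) (Fin k) ℝ) (σ : Perm (Fin k)) : ℝ :=
  ∑ i, S i (σ i)

def IsMinPerm {k : ℕ} (S : Matrix (Fin k) (Fin k) ℝ) (σ : Perm (Fin k)) : Prop :=
  ∀ τ, permCost S σ ≤ permCost S τ

lemma tropNonsing_iff {k : ℕ} {S : Matrix (Fin k) (Fin k) ℝ} :
    TropNonsing S ↔ ∃! σ, IsMinPerm S σ :=
  Iff.rfl

lemma exists_isMinPerm {k : ℕ} (S : Matrix (Fin k) (Fin k) ℝ) : ∃ σ, IsMinPerm S σ := by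
  obtain ⟨σ, -, hσ⟩ := Finset.exists_min_image Finset.univ (permCost S) Finset.univ_nonempty
  exact ⟨σ, fun τ => hσ τ (Finset.mem_univ τ)⟩

lemma permCost_mul_swap {k : ℕ} (S : Matrix (Fin k) (Fin k) ℝ) (τ : Perm (Fin k)) {a b : Fin k}
    (hab : a ≠ b) :
    permCost S (τ * swap a b) + S a (τ a) + S b (τ b) = permCost S τ + S a (τ b) + S b (τ a) := by
  have hdiff : permCost S (τ * swap a b) - permCost S τ
      = (S a (τ b) - S a (τ a)) + (S b (τ a) - S b (τ b)) := by
    rw [permCost, permCost, ← Finset.sum_sub_distrib,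
      Fintype.sum_eq_add a b hab fun x hx => by simp [swap_apply_of_ne_of_ne hx.1 hx.2]]
    simp
  linarith

lemma IsMinPerm.add_le_add_swap {k : ℕ} {S : Matrix (Fin k) (Fin k) ℝ} {τ : Perm (Fin k)}
    (hτ : IsMinPerm S τ) (a b : Fin k) :
    S a (τ a) + S b (τ b) ≤ S a (τ b) + S b (τ a) := by
  rcases eq_or_ne a b with rfl | hab
  · rfl
  · linarith [permCost_mul_swap S τ hab, hτ (τ * swap a b)]

def permExtend (i₀ j₀ : Fin (m + 1)) (π : Perm (Fin m)) : Perm (Fin (m + 1)) :=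
  (finSuccEquiv' i₀).trans ((optionCongr π).trans (finSuccEquiv' j₀).symm)

@[simp]
lemma permExtend_apply_self (i₀ j₀ : Fin (m + 1)) (π : Perm (Fin m)) :
    permExtend i₀ j₀ π i₀ = j₀ := by
  simp [permExtend]

@[simp]
lemma permExtend_apply_succAbove (i₀ j₀ : Fin (m + 1)) (π : Perm (Fin m)) (j : Fin m) :
    permExtend i₀ j₀ π (i₀.succAbove j) = j₀.succAbove (π j) := by
  simp [permExtend]

lemma permExtend_injective (i₀ j₀ : Fin (m + 1)) : Injective (permExtend i₀ j₀) := by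
  intro π π' h
  exact Equiv.ext fun j => by simpa using congr($h (i₀.succAbove j))

lemma exists_permExtend_eq {i₀ j₀ : Fin (m + 1)} (τ : Perm (Fin (m + 1))) (h : τ i₀ = j₀) :
    ∃ π, permExtend i₀ j₀ π = τ := by
  refine ⟨removeNone ((finSuccEquiv' i₀).symm.trans (τ.trans (finSuccEquiv' j₀))), ?_⟩
  ext x
  simp [permExtend, h]

lemma permCost_permExtend (S : Matrix (Fin (m + 1)) (Fin (m + 1)) ℝ) (i₀ j₀ : Fin (m + 1))
    (π : Perm (Fin m)) :
    permCost S (permExtend i₀ j₀ π)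
      = S i₀ j₀ + permCost (S.submatrix i₀.succAbove j₀.succAbove) π := by
  simp [permCost, Fin.sum_univ_succAbove _ i₀]

lemma tropNonsing_submatrix_succAbove {S : Matrix (Fin (m + 1)) (Fin (m + 1)) ℝ}
    {σ : Perm (Fin (m + 1))} (hσ : IsMinPerm S σ) (huniq : ∀ τ, IsMinPerm S τ → τ = σ)
    (i : Fin (m + 1)) : TropNonsing (S.submatrix i.succAbove (σ i).succAbove) := by
  obtain ⟨σ', hσ'⟩ := exists_permExtend_eq (i₀ := i) σ rfl
  have hcost := permCost_permExtend S i (σ i)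
  rw [tropNonsing_iff]
  refine ⟨σ', fun π => ?_, fun π hπ => permExtend_injective i (σ i) ?_⟩
  · linarith [hσ (permExtend i (σ i) π), hcost π, hcost σ', congrArg (permCost S) hσ']
  · rw [hσ']
    refine huniq _ fun τ => ?_
    linarith [hσ τ, hπ σ', hcost π, hcost σ', congrArg (permCost S) hσ']

end PermCost

section TropicalRank

def HasTropNonsingMinor {p q : ℕ} (A : Matrix (Fin p) (Fin q) ℝ) (k : ℕ) : Prop :=
  ∃ (ρ : Fin k → Fin p) (c : Fin k → Fin q), Injective ρ ∧ Injective c ∧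
    TropNonsing (A.submatrix ρ c)

variable {p q : ℕ} {A : Matrix (Fin p) (Fin q) ℝ} {k : ℕ}

lemma bddAbove_hasTropNonsingMinor (A : Matrix (Fin p) (Fin q) ℝ) :
    BddAbove {k | HasTropNonsingMinor A k} :=
  ⟨p, fun _ ⟨ρ, _, hρ, _⟩ => by simpa using Fintype.card_le_of_injective ρ hρ⟩

lemma hasTropNonsingMinor_zero (A : Matrix (Fin p) (Fin q) ℝ) : HasTropNonsingMinor A 0 :=
  ⟨Fin.elim0, Fin.elim0, injective_of_subsingleton _, injective_of_subsingleton _,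
    Equiv.refl _, fun _ => le_rfl, fun _ _ => Subsingleton.elim _ _⟩

lemma HasTropNonsingMinor.le_tropRank (h : HasTropNonsingMinor A k) : k ≤ tropRank A :=
  le_csSup (bddAbove_hasTropNonsingMinor A) h

lemma hasTropNonsingMinor_tropRank (A : Matrix (Fin p) (Fin q) ℝ) :
    HasTropNonsingMinor A (tropRank A) :=
  Nat.sSup_mem ⟨0, hasTropNonsingMinor_zero A⟩ (bddAbove_hasTropNonsingMinor A)

lemma tropRank_le {r : ℕ} (h : ∀ k, HasTropNonsingMinor A k → k ≤ r) : tropRank A ≤ r :=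
  csSup_le ⟨0, hasTropNonsingMinor_zero A⟩ h

end TropicalRank

section Border

/-- The block matrix `[[A, M], [M, 0]]`. -/
def border {p q : ℕ} (A : Matrix (Fin p) (Fin q) ℝ) (M : ℝ) :
    Matrix (Fin (p + 1)) (Fin (q + 1)) ℝ :=
  Matrix.of fun i j =>
    Fin.lastCases (Fin.lastCases 0 (fun _ => M) j) (fun i' => Fin.lastCases M (A i') j) i

variable {p q : ℕ} {A : Matrix (Fin p) (Fin q) ℝ} {M : ℝ}

@[simp] lemma border_castSucc_castSucc (i : Fin p) (j : Fin q) :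
    border A M i.castSucc j.castSucc = A i j := by
  simp [border]

@[simp] lemma border_castSucc_last (i : Fin p) : border A M i.castSucc (Fin.last q) = M := by
  simp [border]

@[simp] lemma border_last_castSucc (j : Fin q) : border A M (Fin.last p) j.castSucc = M := by
  simp [border]

@[simp] lemma border_last_last : border A M (Fin.last p) (Fin.last q) = 0 := by
  simp [border]

lemma border_submatrix_snoc {k : ℕ} (ρ : Fin k → Fin p) (c : Fin k → Fin q) :
    (border A M).submatrix (Fin.snoc (Fin.castSucc ∘ ρ) (Fin.last p))
      (Fin.snoc (Fin.castSucc ∘ c) (Fin.last q)) = border (A.submatrix ρ c) M := by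
  ext i j
  induction i using Fin.lastCases <;> induction j using Fin.lastCases <;> simp

lemma permCost_border_permExtend {m : ℕ} (S : Matrix (Fin m) (Fin m) ℝ) (π : Perm (Fin m)) :
    permCost (border S M) (permExtend (Fin.last m) (Fin.last m) π) = permCost S π := by
  rw [permCost_permExtend]
  simp [permCost]

/-- Otherwise exchanging the rows matched to the border column and to the border row would
trade two entries `M` for the corner `0` and an entry `S i j < 2 * M`. -/
lemma IsMinPerm.apply_last_of_border {m : ℕ} {S : Matrix (Fin m) (Fin m) ℝ}
    (hM : ∀ i j, S i j < 2 * M) {τ : Perm (Fin (m + 1))} (hτ : IsMinPerm (border S M) τ) :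
    τ (Fin.last m) = Fin.last m := by
  by_contra hne
  obtain ⟨j, hj⟩ := Fin.exists_castSucc_eq.mpr hne
  obtain ⟨i, hi⟩ := Fin.exists_castSucc_eq.mpr
    (show τ.symm (Fin.last m) ≠ Fin.last m from fun h => hne (by simpa using congr(τ $h).symm))
  have := hτ.add_le_add_swap (Fin.last m) (τ.symm (Fin.last m))
  simp only [Equiv.apply_symm_apply] at this
  rw [← hi, ← hj] at this
  simp only [border_last_castSucc, border_castSucc_last, border_last_last,
    border_castSucc_castSucc] at this
  linarith [hM i j]

lemma tropNonsing_border {m : ℕ} {S : Matrix (Fin m) (Fin m) ℝ} (hS : TropNonsing S)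
    (hM : ∀ i j, S i j < 2 * M) : TropNonsing (border S M) := by
  rw [tropNonsing_iff] at hS ⊢
  obtain ⟨σ, hσ, huniq⟩ := hS
  obtain ⟨τ, hτ⟩ := exists_isMinPerm (border S M)
  obtain ⟨π, rfl⟩ := exists_permExtend_eq τ (hτ.apply_last_of_border hM)
  refine ⟨permExtend (Fin.last m) (Fin.last m) σ, fun τ' => ?_, fun τ' hτ' => ?_⟩
  · calc permCost (border S M) (permExtend _ _ σ) = permCost S σ := permCost_border_permExtend S σ
      _ ≤ permCost S π := hσ π
      _ = permCost (border S M) (permExtend _ _ π) := (permCost_border_permExtend S π).symm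
      _ ≤ permCost (border S M) τ' := hτ τ'
  · obtain ⟨π', rfl⟩ := exists_permExtend_eq τ' (IsMinPerm.apply_last_of_border hM hτ')
    refine congrArg _ (huniq π' fun π'' => ?_)
    have := hτ' (permExtend (Fin.last m) (Fin.last m) π'')
    rwa [permCost_border_permExtend, permCost_border_permExtend] at this

end Border

section BorderRank

variable {p q k : ℕ} {A : Matrix (Fin p) (Fin q) ℝ} {M : ℝ}

lemma HasTropNonsingMinor.border_succ (h : HasTropNonsingMinor A k)
    (hM : ∀ i j, A i j < 2 * M) : HasTropNonsingMinor (border A M) (k + 1) := by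
  obtain ⟨ρ, c, hρ, hc, hS⟩ := h
  refine ⟨Fin.snoc (Fin.castSucc ∘ ρ) (Fin.last p), Fin.snoc (Fin.castSucc ∘ c) (Fin.last q),
    Fin.snoc_injective_of_injective ((Fin.castSucc_injective p).comp hρ) (by simp),
    Fin.snoc_injective_of_injective ((Fin.castSucc_injective q).comp hc) (by simp), ?_⟩
  rw [border_submatrix_snoc]
  exact tropNonsing_border hS fun i j => hM (ρ i) (c j)

lemma HasTropNonsingMinor.of_border_submatrix {ρ : Fin k → Fin (p + 1)} {c : Fin k → Fin (q + 1)}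
    (hρ : Injective ρ) (hc : Injective c) (hρ_ne : ∀ x, ρ x ≠ Fin.last p)
    (hc_ne : ∀ y, c y ≠ Fin.last q) (h : TropNonsing ((border A M).submatrix ρ c)) :
    HasTropNonsingMinor A k := by
  refine ⟨fun x => (ρ x).castPred (hρ_ne x), fun y => (c y).castPred (hc_ne y),
    fun x x' hxx' => hρ (by simpa using hxx'), fun y y' hyy' => hc (by simpa using hyy'), ?_⟩
  convert h using 1
  ext x y
  have hxy := border_castSucc_castSucc (A := A) (M := M) ((ρ x).castPred (hρ_ne x))
    ((c y).castPred (hc_ne y))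
  rw [Fin.castSucc_castPred, Fin.castSucc_castPred] at hxy
  exact hxy.symm

/-- If the border row is used, the exchange argument shows that it is matched to the border
column. -/
lemma exists_row_absorbing_border {ρ : Fin (k + 1) → Fin (p + 1)} {c : Fin (k + 1) → Fin (q + 1)}
    (hρ : Injective ρ) (hc : Injective c) (hM : ∀ i j, A i j < 2 * M) {σ : Perm (Fin (k + 1))}
    (hσ : IsMinPerm ((border A M).submatrix ρ c) σ) :
    ∃ a, (∀ x, x ≠ a → ρ x ≠ Fin.last p) ∧ (∀ x, x ≠ a → c (σ x) ≠ Fin.last q) := by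
  by_cases hrow : ∃ a, ρ a = Fin.last p
  · obtain ⟨a, ha⟩ := hrow
    refine ⟨a, fun x hx h => hx (hρ (h.trans ha.symm)), fun x hx hlast => ?_⟩
    obtain ⟨j, hj⟩ := Fin.exists_castSucc_eq.mpr
      (show c (σ a) ≠ Fin.last q from fun h => hx (σ.injective (hc (hlast.trans h.symm))))
    obtain ⟨i, hi⟩ := Fin.exists_castSucc_eq.mpr
      (show ρ x ≠ Fin.last p from fun h => hx (hρ (h.trans ha.symm)))
    have := hσ.add_le_add_swap a x
    simp only [Matrix.submatrix_apply, ha, hlast, ← hi, ← hj, border_last_castSucc,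
      border_castSucc_last, border_last_last, border_castSucc_castSucc] at this
    linarith [hM i j]
  · push Not at hrow
    by_cases hcol : ∃ a, c (σ a) = Fin.last q
    · obtain ⟨a, ha⟩ := hcol
      exact ⟨a, fun x _ => hrow x, fun x hx h => hx (σ.injective (hc (h.trans ha.symm)))⟩
    · push Not at hcol
      exact ⟨0, fun x _ => hrow x, fun x _ => hcol x⟩

lemma HasTropNonsingMinor.of_border_succ (h : HasTropNonsingMinor (border A M) (k + 1))
    (hM : ∀ i j, A i j < 2 * M) : HasTropNonsingMinor A k := by
  obtain ⟨ρ, c, hρ, hc, hS⟩ := h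
  rw [tropNonsing_iff] at hS
  obtain ⟨σ, hσ, huniq⟩ := hS
  obtain ⟨a, hρa, hca⟩ := exists_row_absorbing_border hρ hc hM hσ
  have hdel := tropNonsing_submatrix_succAbove hσ huniq a
  rw [Matrix.submatrix_submatrix] at hdel
  refine .of_border_submatrix (hρ.comp (Fin.succAbove_right_injective))
    (hc.comp (Fin.succAbove_right_injective)) (fun x => hρa _ (Fin.succAbove_ne a x))
    (fun y => ?_) hdel
  rw [comp_apply, ← σ.apply_symm_apply ((σ a).succAbove y)]
  exact hca _ fun h => Fin.succAbove_ne (σ a) y (σ.symm_apply_eq.mp h)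

theorem tropRank_border (hM : ∀ i j, A i j < 2 * M) : tropRank (border A M) = tropRank A + 1 :=
  le_antisymm
    (tropRank_le fun
      | 0, _ => Nat.zero_le _
      | _ + 1, h => Nat.succ_le_succ (h.of_border_succ hM).le_tropRank)
    ((hasTropNonsingMinor_tropRank A).border_succ hM).le_tropRank

end BorderRank

section SchurComplement

variable {𝕜 : Type*} [Field 𝕜] {p q : ℕ}

/-- `δ` times the Schur complement of the corner entry `δ`, so that no division occurs. -/
def cornerSchur (F : Matrix (Fin (p + 1)) (Fin (q + 1)) 𝕜) : Matrix (Fin p) (Fin q) 𝕜 :=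
  Matrix.of fun i j => F (Fin.last p) (Fin.last q) * F i.castSucc j.castSucc
    - F i.castSucc (Fin.last q) * F (Fin.last p) j.castSucc

/-- Padding the columns of `cornerSchur F` by a zero gives combinations of columns of `F`
that all vanish in the last coordinate, where the last column of `F` does not. -/
theorem rank_cornerSchur_add_one_le (F : Matrix (Fin (p + 1)) (Fin (q + 1)) 𝕜)
    (hδ : F (Fin.last p) (Fin.last q) ≠ 0) : (cornerSchur F).rank + 1 ≤ F.rank := by
  set pad := ExtendByZero.linearMap 𝕜 (Fin.castSucc : Fin p → Fin (p + 1))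
  have pad_castSucc (x : Fin p → 𝕜) (i : Fin p) : pad x i.castSucc = x i :=
    (Fin.castSucc_injective p).extend_apply _ _ _
  have pad_last (x : Fin p → 𝕜) : pad x (Fin.last p) = 0 :=
    extend_apply' _ _ _ fun ⟨i, hi⟩ => Fin.castSucc_ne_last i hi
  set U := (Submodule.span 𝕜 (Set.range (cornerSchur F).col)).map pad
  set V := Submodule.span 𝕜 (Set.range F.col)
  have hUV : U ≤ V := by
    rw [Submodule.map_span_le]
    rintro _ ⟨j, rfl⟩
    have hcol : pad ((cornerSchur F).col j) = F (Fin.last p) (Fin.last q) • F.col j.castSucc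
        - F (Fin.last p) j.castSucc • F.col (Fin.last q) := by
      ext i
      induction i using Fin.lastCases with
      | last => simp [pad_last, mul_comm]
      | cast i => simp [pad_castSucc, cornerSchur, mul_comm]
    rw [hcol]
    exact sub_mem (Submodule.smul_mem _ _ (Submodule.subset_span ⟨_, rfl⟩))
      (Submodule.smul_mem _ _ (Submodule.subset_span ⟨_, rfl⟩))
  have hUV_lt : U < V := by
    refine SetLike.lt_iff_le_and_exists.mpr ⟨hUV, F.col (Fin.last q),
      Submodule.subset_span ⟨_, rfl⟩, ?_⟩
    rintro ⟨x, -, hx⟩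
    exact hδ (by simpa [pad_last] using congr($hx (Fin.last p)).symm)
  have hU : Module.finrank 𝕜 U = (cornerSchur F).rank := by
    rw [Matrix.rank_eq_finrank_span_cols]
    exact (Submodule.equivMapOfInjective pad
      (extend_injective (Fin.castSucc_injective p) 0) _).finrank_eq.symm
  rw [Matrix.rank_eq_finrank_span_cols F, ← hU]
  exact Submodule.finrank_lt_finrank_of_lt hUV_lt

end SchurComplement

section KapranovRank

variable {p q : ℕ}

lemma Kdeg_eq_orderTop (a : K) : Kdeg a = a.orderTop := by
  unfold Kdeg
  split_ifs with h
  · simp [h]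
  · rw [HahnSeries.order_eq_orderTop_of_ne_zero h]

lemma IsLift.ne_zero {F : Matrix (Fin p) (Fin q) K} {B : Matrix (Fin p) (Fin q) ℝ}
    (hF : IsLift F B) (i : Fin p) (j : Fin q) : F i j ≠ 0 := by
  have h := hF i j
  rw [Kdeg_eq_orderTop] at h
  exact HahnSeries.orderTop_ne_top.mp (h ▸ WithTop.coe_ne_top)

lemma exists_isLift (B : Matrix (Fin p) (Fin q) ℝ) : ∃ F : Matrix (Fin p) (Fin q) K, IsLift F B :=
  ⟨Matrix.of fun i j => HahnSeries.single (B i j) 1, fun i j => by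
    simp [Kdeg_eq_orderTop, HahnSeries.orderTop_single]⟩

lemma kapRank_le_rank {F : Matrix (Fin p) (Fin q) K} {B : Matrix (Fin p) (Fin q) ℝ}
    (hF : IsLift F B) : kapRank B ≤ F.rank :=
  Nat.sInf_le ⟨F, hF, rfl⟩

lemma exists_isLift_rank_eq_kapRank (B : Matrix (Fin p) (Fin q) ℝ) :
    ∃ F : Matrix (Fin p) (Fin q) K, IsLift F B ∧ F.rank = kapRank B := by
  obtain ⟨F, hF⟩ := exists_isLift B
  exact Nat.sInf_mem (s := {r | ∃ F, IsLift F B ∧ F.rank = r}) ⟨F.rank, F, hF, rfl⟩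

variable {A : Matrix (Fin p) (Fin q) ℝ} {M : ℝ}

/-- The correction term `F i ∞ * F ∞ j` has degree `2 * M`, so it does not affect the
leading term of degree `A i j`. -/
lemma IsLift.cornerSchur {F : Matrix (Fin (p + 1)) (Fin (q + 1)) K} (hF : IsLift F (border A M))
    (hM : ∀ i j, A i j < 2 * M) : IsLift (cornerSchur F) A := by
  intro i j
  have hdeg := fun i j => (Kdeg_eq_orderTop (F i j)).symm.trans (hF i j)
  have hlt : (F (Fin.last p) (Fin.last q) * F i.castSucc j.castSucc).orderTop
      < (F i.castSucc (Fin.last q) * F (Fin.last p) j.castSucc).orderTop := by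
    simp only [HahnSeries.orderTop_mul, hdeg, border_last_last, border_castSucc_castSucc,
      border_castSucc_last, border_last_castSucc]
    exact_mod_cast (by linarith [hM i j] : 0 + A i j < M + M)
  rw [Kdeg_eq_orderTop, _root_.cornerSchur, Matrix.of_apply, HahnSeries.orderTop_sub hlt,
    HahnSeries.orderTop_mul, hdeg, hdeg]
  simp

theorem kapRank_border (hM : ∀ i j, A i j < 2 * M) :
    kapRank A + 1 ≤ kapRank (border A M) := by
  obtain ⟨F, hF, hrank⟩ := exists_isLift_rank_eq_kapRank (border A M)
  calc kapRank A + 1 ≤ (cornerSchur F).rank + 1 := by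
        gcongr; exact kapRank_le_rank (hF.cornerSchur hM)
    _ ≤ F.rank := rank_cornerSchur_add_one_le F (hF.ne_zero _ _)
    _ = kapRank (border A M) := hrank

end KapranovRank

theorem extend_gap_to_larger_rank (d n r : ℕ) (A : Matrix (Fin d) (Fin n) ℝ)
    (ht : tropRank A = r) (hk : r < kapRank A) :
    ∃ B : Matrix (Fin (d + 1)) (Fin (n + 1)) ℝ,
      tropRank B = r + 1 ∧ r + 1 < kapRank B := by
  obtain ⟨C, hC⟩ := (Set.finite_range (uncurry A)).bddAbove
  have hM (i : Fin d) (j : Fin n) : A i j < 2 * (C / 2 + 1) := by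
    linarith [hC ⟨(i, j), rfl⟩, show uncurry A (i, j) = A i j from rfl]
  refine ⟨border A (C / 2 + 1), ?_, ?_⟩
  · rw [tropRank_border hM, ht]
  · linarith [kapRank_border hM]

end
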